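/- arXiv:1502.06405 — 7 statements merged into one kernel-verified Lean document; each statement's English description precedes it below -/
import Mathlib

section
/- For every natural number m, the sum over k from 0 to m of (binom(m,k) * binom(m,k)) / binom(2m, 2k) equals (2m)!! / (2m-1)!!, which also equals 4^m * (m!)^2 / (2m)!. -/
open Nat Finset

private def bb (k : ℕ) : ℚ := (Nat.centralBinom k : ℚ) / 4 ^ k

private lemma bb_zero : bb 0 = 1 := by simp [bb, Nat.centralBinom]

private lemma bb_succ (k : ℕ) :
    bb (k + 1) = bb k * (2 * k + 1) / (2 * k + 2) := by
  have h : ((k : ℚ) + 1) * (Nat.centralBinom (k + 1) : ℚ)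
      = 2 * (2 * k + 1) * (Nat.centralBinom k : ℚ) := by
    exact_mod_cast congrArg (Nat.cast (R := ℚ)) (Nat.succ_mul_centralBinom_succ k)
  have hk1 : ((k : ℚ) + 1) ≠ 0 := by positivity
  have h4 : ((4 : ℚ)) ^ k ≠ 0 := by positivity
  have hc : (Nat.centralBinom (k + 1) : ℚ)
      = 2 * (2 * k + 1) * (Nat.centralBinom k : ℚ) / ((k : ℚ) + 1) := by
    rw [eq_div_iff hk1]; linarith [h]
  unfold bb
  rw [hc, pow_succ]
  field_simp
  ring

private lemma bb_step (k j : ℕ) :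
    bb k * bb (j + 1) - bb k * bb j
      = ((k : ℚ) / ((k : ℚ) + (j : ℚ) + 1)) * (bb k * bb (j + 1))
        - (((k : ℚ) + 1) / ((k : ℚ) + (j : ℚ) + 1)) * (bb (k + 1) * bb j) := by
  rw [bb_succ k, bb_succ j]
  have h1 : (2 * (j : ℚ) + 2) ≠ 0 := by positivity
  have h2 : (2 * (k : ℚ) + 2) ≠ 0 := by positivity
  have h3 : ((k : ℚ) + (j : ℚ) + 1) ≠ 0 := by positivity
  field_simp
  ring

private lemma bb_conv (n : ℕ) :
    ∑ k ∈ Finset.range (n + 1), bb k * bb (n - k) = 1 := by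
  induction n with
  | zero => simp [bb_zero]
  | succ n ih =>
    set h : ℕ → ℚ := fun k => ((k : ℚ) / ((n : ℚ) + 1)) * (bb k * bb (n + 1 - k)) with hh
    have hterm : ∀ k ∈ Finset.range (n + 1),
        bb k * bb (n + 1 - k) = bb k * bb (n - k) + (h k - h (k + 1)) := by
      intro k hk
      have hkn : k ≤ n := Nat.lt_succ_iff.mp (Finset.mem_range.mp hk)
      have e1 : n + 1 - k = (n - k) + 1 := by omega
      have e2 : n + 1 - (k + 1) = n - k := by omega
      have e3 : (k : ℚ) + ((n : ℚ) - (k : ℚ)) + 1 = (n : ℚ) + 1 := by ring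
      have e4 : ((n - k : ℕ) : ℚ) = (n : ℚ) - (k : ℚ) := by
        push_cast [hkn]; ring
      have := bb_step k (n - k)
      rw [e4, e3] at this
      simp only [hh, e1, e2]
      push_cast
      linarith [this]
    rw [Finset.sum_range_succ, Finset.sum_congr rfl hterm, Finset.sum_add_distrib,
      Finset.sum_range_sub' h, ih]
    have h0 : h 0 = 0 := by simp [hh]
    have hn1 : h (n + 1) = bb (n + 1) := by
      simp only [hh]
      rw [Nat.sub_self, bb_zero, mul_one]
      push_cast
      rw [div_self (by positivity : ((n : ℚ) + 1) ≠ 0), one_mul]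
    rw [h0, hn1]
    simp [bb_zero]

private lemma fact_ne (j : ℕ) : ((j ! : ℕ) : ℚ) ≠ 0 := by
  exact_mod_cast (Nat.factorial_pos j).ne'

theorem stmt_0 (m : ℕ) :
    (∑ k ∈ Finset.range (m + 1),
      ((m.choose k : ℚ) * (m.choose k)) / ((2 * m).choose (2 * k)))
      = ((2 * m)‼ : ℚ) / ((2 * m - 1)‼) ∧
    ((2 * m)‼ : ℚ) / ((2 * m - 1)‼) = 4 ^ m * (m ! : ℚ) ^ 2 / ((2 * m)!) := by
  -- facts about double factorials
  have hd : ((2 * m)! : ℕ) = (2 * m)‼ * (2 * m - 1)‼ := by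
    cases m with
    | zero => rfl
    | succ m' =>
      have e1 : 2 * (m' + 1) = (2 * m' + 1) + 1 := by omega
      have e2 : 2 * (m' + 1) - 1 = 2 * m' + 1 := by omega
      rw [e2, e1]
      exact Nat.factorial_eq_mul_doubleFactorial (2 * m' + 1)
  have h2m : ((2 * m)‼ : ℚ) = 2 ^ m * (m ! : ℚ) := by
    exact_mod_cast congrArg (Nat.cast (R := ℚ)) (Nat.doubleFactorial_two_mul m)
  have hdQ : ((2 * m)! : ℚ) = ((2 * m)‼ : ℚ) * ((2 * m - 1)‼ : ℚ) := by
    exact_mod_cast congrArg (Nat.cast (R := ℚ)) hd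
  have hodd_ne : (((2 * m - 1)‼ : ℕ) : ℚ) ≠ 0 := by
    exact_mod_cast (Nat.doubleFactorial_pos _).ne'
  have hfact_ne : (((2 * m)! : ℕ) : ℚ) ≠ 0 := fact_ne _
  have hsq : ((2 * m)‼ : ℚ) * ((2 * m)‼ : ℚ) = 4 ^ m * (m ! : ℚ) ^ 2 := by
    rw [h2m]
    have : (4 : ℚ) ^ m = 2 ^ m * 2 ^ m := by
      rw [show (4 : ℚ) = 2 * 2 by norm_num, mul_pow]
    rw [this]; ring
  have hsecond : ((2 * m)‼ : ℚ) / ((2 * m - 1)‼) = 4 ^ m * (m ! : ℚ) ^ 2 / ((2 * m)!) := by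
    rw [div_eq_div_iff hodd_ne hfact_ne, hdQ, ← mul_assoc, hsq]
  refine ⟨?_, hsecond⟩
  rw [hsecond]
  -- rewrite each term
  have hterm : ∀ k ∈ Finset.range (m + 1),
      ((m.choose k : ℚ) * (m.choose k)) / ((2 * m).choose (2 * k))
        = (4 ^ m * (m ! : ℚ) ^ 2 / ((2 * m)!)) * (bb k * bb (m - k)) := by
    intro k hk
    have hkm : k ≤ m := Nat.lt_succ_iff.mp (Finset.mem_range.mp hk)
    have h2k : 2 * k ≤ 2 * m := by omega
    have e1 : 2 * m - 2 * k = 2 * (m - k) := by omega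
    have hc1 : ((m.choose k : ℕ) : ℚ) = (m ! : ℚ) / ((k ! : ℚ) * (((m - k)! : ℕ) : ℚ)) :=
      Nat.cast_choose ℚ hkm
    have hc2 : (((2 * m).choose (2 * k) : ℕ) : ℚ)
        = ((2 * m)! : ℚ) / (((2 * k)! : ℚ) * (((2 * m - 2 * k)! : ℕ) : ℚ)) :=
      Nat.cast_choose ℚ h2k
    have hb1 : bb k = (((2 * k)! : ℕ) : ℚ) / (((k ! : ℕ) : ℚ) * ((k ! : ℕ) : ℚ) * 4 ^ k) := by
      unfold bb
      rw [Nat.centralBinom, Nat.cast_choose ℚ (by omega : k ≤ 2 * k),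
        show 2 * k - k = k by omega]
      field_simp
    have hb2 : bb (m - k) = (((2 * (m - k))! : ℕ) : ℚ)
        / ((((m - k)! : ℕ) : ℚ) * (((m - k)! : ℕ) : ℚ) * 4 ^ (m - k)) := by
      unfold bb
      rw [Nat.centralBinom, Nat.cast_choose ℚ (by omega : m - k ≤ 2 * (m - k)),
        show 2 * (m - k) - (m - k) = m - k by omega]
      field_simp
    have h4 : (4 : ℚ) ^ k * 4 ^ (m - k) = 4 ^ m := by
      rw [← pow_add]; congr 1; omega
    rw [hc1, hc2, hb1, hb2, e1, ← h4]
    have n1 := fact_ne m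
    have n2 := fact_ne k
    have n3 := fact_ne (m - k)
    have n4 := fact_ne (2 * k)
    have n5 := fact_ne (2 * (m - k))
    have n6 := fact_ne (2 * m)
    have n7 : (4 : ℚ) ^ k ≠ 0 := by positivity
    have n8 : (4 : ℚ) ^ (m - k) ≠ 0 := by positivity
    have hcb : (((2 * m)! : ℕ) : ℚ) / (((2 * k)! : ℚ) * (((2 * m - 2 * k)! : ℕ) : ℚ)) ≠ 0 := by
      rw [e1]
      positivity
    field_simp
  rw [Finset.sum_congr rfl hterm, ← Finset.mul_sum, bb_conv, mul_one]
end

section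
/- For every natural number m, the sum over k from 0 to m of (binom(m,k) * binom(m,k+1)) / binom(2m, 2k) equals (2m+1) - (2m)!!/(2m-1)!!. -/
open Nat Finset

private def ee : ℕ → ℕ
  | 0 => 1
  | (m+1) => (2*m+1) * ee m

private def ff : ℕ → ℕ
  | 0 => 1
  | (m+1) => (2*m+2) * ff m

private lemma ee_zero : ee 0 = 1 := rfl
private lemma ee_succ (n : ℕ) : ee (n+1) = (2*n+1) * ee n := rfl
private lemma ff_succ (n : ℕ) : ff (n+1) = (2*n+2) * ff n := rfl

private lemma ee_pos (m : ℕ) : 0 < ee m := by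
  induction m with
  | zero => simp [ee]
  | succ m ih => simp [ee]; positivity

private lemma ff_pos (m : ℕ) : 0 < ff m := by
  induction m with
  | zero => simp [ff]
  | succ m ih => simp [ff]; positivity

private lemma ffee (m : ℕ) : ff m * ee m = (2*m)! := by
  induction m with
  | zero => simp [ff, ee]
  | succ m ih =>
      have h2 : 2*(m+1) = 2*m + 1 + 1 := by ring
      rw [ff, ee, h2, Nat.factorial_succ, Nat.factorial_succ, ← ih]
      ring

private lemma ff_eq_pow (m : ℕ) : ff m = 2^m * m ! := by
  induction m with
  | zero => simp [ff]
  | succ m ih => rw [ff, ih, Nat.factorial_succ, pow_succ]; ring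

private lemma key_nat (m k : ℕ) (h : k ≤ m) :
    m.choose k * ee m = ee k * ee (m-k) * (2*m).choose (2*k) := by
  have hc : (2*m).choose (2*k) * (2*k)! * (2*m - 2*k)! = (2*m)! :=
    Nat.choose_mul_factorial_mul_factorial (by omega)
  have h2 : 2*(m-k) = 2*m - 2*k := by omega
  apply Nat.eq_of_mul_eq_mul_right (Nat.mul_pos (ff_pos k) (ff_pos (m-k)))
  have lhs : m.choose k * ee m * (ff k * ff (m-k)) = ee m * (2^m * m !) := by
    rw [ff_eq_pow, ff_eq_pow]
    have hm : k + (m - k) = m := by omega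
    calc m.choose k * ee m * (2^k * k ! * (2^(m-k) * (m-k)!))
        = ee m * ((2^k * 2^(m-k)) * (m.choose k * k ! * (m-k)!)) := by ring
      _ = ee m * (2^m * m !) := by
          rw [← pow_add, hm, Nat.choose_mul_factorial_mul_factorial h]
  have rhs : ee k * ee (m-k) * (2*m).choose (2*k) * (ff k * ff (m-k)) = ee m * (2^m * m !) := by
    calc ee k * ee (m-k) * (2*m).choose (2*k) * (ff k * ff (m-k))
        = (ff k * ee k) * (ff (m-k) * ee (m-k)) * (2*m).choose (2*k) := by ring
      _ = (2*k)! * (2*(m-k))! * (2*m).choose (2*k) := by rw [ffee, ffee]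
      _ = (2*m).choose (2*k) * (2*k)! * (2*m-2*k)! := by rw [h2]; ring
      _ = (2*m)! := hc
      _ = ff m * ee m := (ffee m).symm
      _ = ee m * (2^m * m !) := by rw [ff_eq_pow]; ring
  rw [lhs, rhs]

private lemma sumP (m : ℕ) :
    ∑ k ∈ Finset.range (m+1), m.choose k * ee k * ee (m-k) = ff m := by
  induction m with
  | zero => simp [ee, ff]
  | succ m ih =>
      have hgoal : ∑ k ∈ Finset.range (m+2), (m+1).choose k * ee k * ee (m+1-k)
          = ee (m+1) + ((∑ k ∈ Finset.range (m+1), (2*k+1) * (m.choose k * ee k * ee (m-k)))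
            + ∑ k ∈ Finset.range (m+1), m.choose (k+1) * ee (k+1) * ee (m-k)) := by
        rw [Finset.sum_range_succ']
        simp only [Nat.choose_zero_right, Nat.succ_sub_succ]
        have : ∀ k ∈ Finset.range (m+1),
            (m+1).choose (k+1) * ee (k+1) * ee (m-k)
            = (2*k+1) * (m.choose k * ee k * ee (m-k)) + m.choose (k+1) * ee (k+1) * ee (m-k) := by
          intro k _
          rw [Nat.choose_succ_succ, ee_succ]
          ring
        rw [Finset.sum_congr rfl this, Finset.sum_add_distrib]
        simp [ee_zero]
        ring
      -- S := ∑_{k<m+2} m.choose k * ee k * ee (m+1-k)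
      have hS1 : ∑ k ∈ Finset.range (m+2), m.choose k * ee k * ee (m+1-k)
          = (∑ k ∈ Finset.range (m+1), m.choose (k+1) * ee (k+1) * ee (m-k)) + ee (m+1) := by
        rw [Finset.sum_range_succ']
        simp [Nat.succ_sub_succ, ee_zero]
      have hS2 : ∑ k ∈ Finset.range (m+2), m.choose k * ee k * ee (m+1-k)
          = ∑ k ∈ Finset.range (m+1), (2*(m-k)+1) * (m.choose k * ee k * ee (m-k)) := by
        rw [Finset.sum_range_succ]
        simp only [Nat.choose_succ_self, zero_mul, mul_zero, add_zero]
        apply Finset.sum_congr rfl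
        intro k hk
        have hk' : k ≤ m := by simpa [Nat.lt_succ_iff] using hk
        have : m + 1 - k = (m - k) + 1 := by omega
        rw [this, ee_succ]
        ring
      have hcomb : (∑ k ∈ Finset.range (m+1), (2*k+1) * (m.choose k * ee k * ee (m-k)))
          + ∑ k ∈ Finset.range (m+1), (2*(m-k)+1) * (m.choose k * ee k * ee (m-k))
          = (2*m+2) * ff m := by
        rw [← Finset.sum_add_distrib, ← ih, Finset.mul_sum]
        apply Finset.sum_congr rfl
        intro k hk
        have hk' : k ≤ m := by simpa [Nat.lt_succ_iff] using hk
        have : (2*k+1) + (2*(m-k)+1) = 2*m+2 := by omega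
        rw [← add_mul, this]
      have hff : ff (m+1) = (2*m+2) * ff m := rfl
      linarith [hgoal, hS1, hS2, hcomb]

private lemma sumQ (m : ℕ) :
    ∑ k ∈ Finset.range (m+1), (m+1).choose k * ee k * ee (m-k) = ee (m+1) := by
  induction m with
  | zero => simp [ee]
  | succ m ih =>
      have hgoal : ∑ k ∈ Finset.range (m+2), (m+2).choose k * ee k * ee (m+1-k)
          = ee (m+1) + ((∑ k ∈ Finset.range (m+1), (2*k+1) * ((m+1).choose k * ee k * ee (m-k)))
            + ∑ k ∈ Finset.range (m+1), (m+1).choose (k+1) * ee (k+1) * ee (m-k)) := by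
        rw [Finset.sum_range_succ']
        simp only [Nat.choose_zero_right, Nat.succ_sub_succ]
        have : ∀ k ∈ Finset.range (m+1),
            (m+2).choose (k+1) * ee (k+1) * ee (m-k)
            = (2*k+1) * ((m+1).choose k * ee k * ee (m-k)) + (m+1).choose (k+1) * ee (k+1) * ee (m-k) := by
          intro k _
          rw [Nat.choose_succ_succ, ee_succ]
          ring
        rw [Finset.sum_congr rfl this, Finset.sum_add_distrib]
        simp [ee_zero]
        ring
      have hS1 : ∑ k ∈ Finset.range (m+2), (m+1).choose k * ee k * ee (m+1-k)
          = (∑ k ∈ Finset.range (m+1), (m+1).choose (k+1) * ee (k+1) * ee (m-k)) + ee (m+1) := by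
        rw [Finset.sum_range_succ']
        simp [Nat.succ_sub_succ, ee_zero]
      have hS2 : ∑ k ∈ Finset.range (m+2), (m+1).choose k * ee k * ee (m+1-k)
          = (∑ k ∈ Finset.range (m+1), (2*(m-k)+1) * ((m+1).choose k * ee k * ee (m-k))) + ee (m+1) := by
        rw [Finset.sum_range_succ]
        simp only [Nat.choose_self, one_mul, Nat.sub_self, Nat.add_sub_cancel_left]
        congr 1
        · apply Finset.sum_congr rfl
          intro k hk
          have hk' : k ≤ m := by simpa [Nat.lt_succ_iff] using hk
          have : m + 1 - k = (m - k) + 1 := by omega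
          rw [this, ee_succ]
          ring
        · simp [ee_zero]
      have hcomb : (∑ k ∈ Finset.range (m+1), (2*k+1) * ((m+1).choose k * ee k * ee (m-k)))
          + ∑ k ∈ Finset.range (m+1), (2*(m-k)+1) * ((m+1).choose k * ee k * ee (m-k))
          = (2*m+2) * ee (m+1) := by
        rw [← Finset.sum_add_distrib, ← ih, Finset.mul_sum]
        apply Finset.sum_congr rfl
        intro k hk
        have hk' : k ≤ m := by simpa [Nat.lt_succ_iff] using hk
        have : (2*k+1) + (2*(m-k)+1) = 2*m+2 := by omega
        rw [← add_mul, this]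
      have hee : ee (m+2) = (2*(m+1)+1) * ee (m+1) := by
        rw [ee_succ]
      linarith [hgoal, hS1, hS2, hcomb]

private lemma sumA (m : ℕ) :
    ∑ k ∈ Finset.range (m+1), (m+1).choose (k+1) * ee k * ee (m-k) = ee (m+1) := by
  have hrefl := Finset.sum_range_reflect
    (fun k => (m+1).choose (k+1) * ee k * ee (m-k)) (m+1)
  rw [← hrefl]
  rw [← sumQ m]
  apply Finset.sum_congr rfl
  intro j hj
  have hj' : j ≤ m := by simpa [Nat.lt_succ_iff] using hj
  simp only [Nat.add_sub_cancel]
  have h1 : m - j + 1 = (m+1) - j := by omega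
  have h2 : m - (m - j) = j := by omega
  rw [h1, h2, Nat.choose_symm (by omega)]
  ring

private lemma e_eq (m : ℕ) : ee m = (2*m-1)‼ := by
  induction m with
  | zero => simp [ee]
  | succ m ih =>
      have h1 : 2*(m+1)-1 = 2*m+1 := by omega
      rw [ee, ih, h1]
      cases m with
      | zero => simp
      | succ n =>
          have h2 : 2*(n+1)+1 = (2*n+1)+2 := by ring
          have h3 : 2*(n+1)-1 = 2*n+1 := by omega
          rw [h2, h3, Nat.doubleFactorial_add_two]

private lemma f_eq (m : ℕ) : ff m = (2*m)‼ := by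
  induction m with
  | zero => simp [ff]
  | succ m ih =>
      have h2 : 2*(m+1) = (2*m)+2 := by ring
      rw [ff, ih, h2, Nat.doubleFactorial_add_two]

theorem stmt_1 (m : ℕ) :
    (∑ k ∈ Finset.range (m + 1),
      ((m.choose k : ℚ) * (m.choose (k + 1))) / ((2 * m).choose (2 * k)))
      = (2 * m + 1) - ((2 * m)‼ : ℚ) / ((2 * m - 1)‼) := by
  have heem : (0:ℚ) < (ee m : ℚ) := by exact_mod_cast ee_pos m
  have hterm : ∀ k ∈ Finset.range (m+1),
      ((m.choose k : ℚ) * (m.choose (k + 1))) / ((2 * m).choose (2 * k))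
      = ((m.choose (k+1) * ee k * ee (m-k) : ℕ) : ℚ) / (ee m : ℚ) := by
    intro k hk
    have hk' : k ≤ m := by simpa [Nat.lt_succ_iff] using hk
    have hC : (0:ℚ) < ((2*m).choose (2*k) : ℚ) := by
      exact_mod_cast Nat.choose_pos (by omega : 2*k ≤ 2*m)
    rw [div_eq_div_iff (ne_of_gt hC) (ne_of_gt heem)]
    have hK : (m.choose k : ℚ) * ee m = ee k * ee (m-k) * (2*m).choose (2*k) := by
      exact_mod_cast key_nat m k hk'
    push_cast
    linear_combination ((m.choose (k+1) : ℚ)) * hK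
  rw [Finset.sum_congr rfl hterm, ← Finset.sum_div]
  have hnum : (∑ k ∈ Finset.range (m+1), m.choose (k+1) * ee k * ee (m-k)) + ff m
      = ee (m+1) := by
    have hsplit : ∑ k ∈ Finset.range (m+1), (m+1).choose (k+1) * ee k * ee (m-k)
        = (∑ k ∈ Finset.range (m+1), m.choose k * ee k * ee (m-k))
          + ∑ k ∈ Finset.range (m+1), m.choose (k+1) * ee k * ee (m-k) := by
      rw [← Finset.sum_add_distrib]
      apply Finset.sum_congr rfl
      intro k _
      rw [Nat.choose_succ_succ]
      ring
    have := sumA m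
    rw [hsplit, sumP m] at this
    omega
  have hcast : ((∑ k ∈ Finset.range (m+1), m.choose (k+1) * ee k * ee (m-k) : ℕ) : ℚ)
      = (2*m+1) * (ee m : ℚ) - (ff m : ℚ) := by
    have h1 : ((ee (m+1) : ℕ) : ℚ) = (2*m+1) * (ee m : ℚ) := by
      rw [show ee (m+1) = (2*m+1) * ee m from rfl]; push_cast; ring
    have h2 := congrArg (fun n : ℕ => (n : ℚ)) hnum
    push_cast at h2 ⊢
    rw [h1] at h2
    linarith
  rw [← Nat.cast_sum, hcast, ← e_eq, ← f_eq]
  have hne : (ee m : ℚ) ≠ 0 := ne_of_gt heem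
  field_simp
end

section
/- For every natural number m, the sum over k from 0 to m of (binom(m,k) * binom(m+1,k+1)) / binom(2m, 2k) equals 2m+1. -/
open Nat Finset

private lemma keyB (m : ℕ) :
    2 * ∑ k ∈ Finset.range (m + 1), catalan k * Nat.centralBinom (m - k)
      = Nat.centralBinom (m + 1) := by
  have h1 : ∀ k ∈ Finset.range (m + 1), catalan k * Nat.centralBinom (m - k)
      = (m - k + 1) * (catalan k * catalan (m - k)) := by
    intro k hk
    rw [← succ_mul_catalan_eq_centralBinom]
    ring
  rw [Finset.sum_congr rfl h1, ← succ_mul_catalan_eq_centralBinom, catalan_succ,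
    Fin.sum_univ_eq_sum_range (fun i => catalan i * catalan (m - i)) (m + 1), two_mul]
  nth_rewrite 1 [← Finset.sum_range_reflect]
  rw [← Finset.sum_add_distrib, Finset.mul_sum]
  apply Finset.sum_congr rfl
  intro k hk
  have hk' : k ≤ m := by simpa [Nat.lt_succ_iff] using hk
  have h2 : m + 1 - 1 - k = m - k := by omega
  have h3 : m - (m - k) = k := by omega
  rw [h2, h3]
  have h4 : m - k + 1 + (k + 1) = m + 1 + 1 := by omega
  have h6 : (m - k + 1 + (k + 1)) * (catalan (m - k) * catalan k)
      = (m + 1 + 1) * (catalan (m - k) * catalan k) := by rw [h4]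
  ring_nf
  ring_nf at h6
  linarith [h6]

private lemma termEq (m k : ℕ) (hk : k ≤ m) :
    ((m.choose k : ℚ) * ((m + 1).choose (k + 1))) / ((2 * m).choose (2 * k))
      = ((m : ℚ) + 1) * (catalan k * Nat.centralBinom (m - k)) / Nat.centralBinom m := by
  have hcat : (catalan k : ℚ) = ((2 * k).choose k : ℚ) / (k + 1) := by
    have := succ_mul_catalan_eq_centralBinom k
    have h : ((k : ℚ) + 1) * catalan k = ((2 * k).choose k : ℚ) := by
      exact_mod_cast this
    rw [← h, mul_div_cancel_left₀ _ (by positivity : ((k : ℚ) + 1) ≠ 0)]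
  have hcb : (Nat.centralBinom m : ℚ) = ((2 * m).choose m : ℚ) := by
    norm_cast
  have hcb2 : (Nat.centralBinom (m - k) : ℚ) = ((2 * (m - k)).choose (m - k) : ℚ) := by
    norm_cast
  rw [hcat, hcb, hcb2]
  have e1 : ((m.choose k : ℚ)) = (m ! : ℚ) / (k ! * (m - k)!) :=
    Nat.cast_choose ℚ hk
  have e2 : (((m + 1).choose (k + 1) : ℚ)) = ((m + 1)! : ℚ) / ((k + 1)! * (m - k)!) := by
    have h : m + 1 - (k + 1) = m - k := by omega
    rw [Nat.cast_choose ℚ (by omega : k + 1 ≤ m + 1), h]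
  have e3 : (((2 * m).choose (2 * k) : ℚ)) = ((2 * m)! : ℚ) / ((2 * k)! * (2 * (m - k))!) := by
    have h : 2 * m - 2 * k = 2 * (m - k) := by omega
    rw [Nat.cast_choose ℚ (by omega : 2 * k ≤ 2 * m), h]
  have e4 : (((2 * k).choose k : ℚ)) = ((2 * k)! : ℚ) / (k ! * k !) := by
    have h : 2 * k - k = k := by omega
    rw [Nat.cast_choose ℚ (by omega : k ≤ 2 * k), h]
  have e5 : (((2 * (m - k)).choose (m - k) : ℚ))
      = ((2 * (m - k))! : ℚ) / ((m - k)! * (m - k)!) := by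
    have h : 2 * (m - k) - (m - k) = m - k := by omega
    rw [Nat.cast_choose ℚ (by omega : m - k ≤ 2 * (m - k)), h]
  have e6 : (((2 * m).choose m : ℚ)) = ((2 * m)! : ℚ) / (m ! * m !) := by
    have h : 2 * m - m = m := by omega
    rw [Nat.cast_choose ℚ (by omega : m ≤ 2 * m), h]
  rw [e1, e2, e3, e4, e5, e6, Nat.factorial_succ m, Nat.factorial_succ k]
  have f1 : (m ! : ℚ) ≠ 0 := by exact_mod_cast m.factorial_ne_zero
  have f2 : (k ! : ℚ) ≠ 0 := by exact_mod_cast k.factorial_ne_zero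
  have f3 : ((m - k)! : ℚ) ≠ 0 := by exact_mod_cast (m - k).factorial_ne_zero
  have f4 : ((2 * m)! : ℚ) ≠ 0 := by exact_mod_cast (2 * m).factorial_ne_zero
  have f5 : ((2 * k)! : ℚ) ≠ 0 := by exact_mod_cast (2 * k).factorial_ne_zero
  have f6 : ((2 * (m - k))! : ℚ) ≠ 0 := by exact_mod_cast (2 * (m - k)).factorial_ne_zero
  have f7 : ((k : ℚ) + 1) ≠ 0 := by positivity
  have f8 : ((m : ℚ) + 1) ≠ 0 := by positivity
  push_cast
  field_simp

theorem stmt_2 (m : ℕ) :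
    (∑ k ∈ Finset.range (m + 1),
      ((m.choose k : ℚ) * ((m + 1).choose (k + 1))) / ((2 * m).choose (2 * k)))
      = 2 * m + 1 := by
  have h1 : ∀ k ∈ Finset.range (m + 1),
      ((m.choose k : ℚ) * ((m + 1).choose (k + 1))) / ((2 * m).choose (2 * k))
        = ((m : ℚ) + 1) * (catalan k * Nat.centralBinom (m - k)) / Nat.centralBinom m := by
    intro k hk
    exact termEq m k (by simpa [Nat.lt_succ_iff] using hk)
  rw [Finset.sum_congr rfl h1, ← Finset.sum_div, ← Finset.mul_sum]
  have hS : (∑ k ∈ Finset.range (m + 1), ((catalan k : ℚ) * Nat.centralBinom (m - k)))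
      = ((∑ k ∈ Finset.range (m + 1), catalan k * Nat.centralBinom (m - k) : ℕ) : ℚ) := by
    push_cast
    rfl
  rw [hS]
  have hB := keyB m
  have hC := Nat.succ_mul_centralBinom_succ m
  have hcb : (Nat.centralBinom m : ℚ) ≠ 0 := by
    exact_mod_cast m.centralBinom_pos.ne'
  have key : 2 * (((m : ℚ) + 1) *
      ((∑ k ∈ Finset.range (m + 1), catalan k * Nat.centralBinom (m - k) : ℕ) : ℚ))
      = 2 * ((2 * m + 1) * (Nat.centralBinom m : ℚ)) := by
    have : (m + 1) * (2 * ∑ k ∈ Finset.range (m + 1), catalan k * Nat.centralBinom (m - k))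
        = 2 * ((2 * m + 1) * Nat.centralBinom m) := by
      rw [hB]
      calc (m + 1) * Nat.centralBinom (m + 1) = 2 * (2 * m + 1) * Nat.centralBinom m := hC
        _ = 2 * ((2 * m + 1) * Nat.centralBinom m) := by ring
    have h' : ((m : ℚ) + 1) * (2 * ((∑ k ∈ Finset.range (m + 1),
        catalan k * Nat.centralBinom (m - k) : ℕ) : ℚ))
        = 2 * ((2 * m + 1) * (Nat.centralBinom m : ℚ)) := by
      exact_mod_cast this
    linarith [h']
  rw [div_eq_iff hcb]
  linarith [key]
end

section
/- For every natural number m, the sum over k from 0 to m of ((2k)! / (k! * (k+1)!)) * ((2m-2k)! / ((m-k)! * (m-k)!)) equals binom(2m+1, m). -/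
/-!
Let `C = ∑ catalan n Xⁿ` and `B = ∑ centralBinom n Xⁿ`. The Catalan equation `X C² = C - 1` gives
`(1 - 2XC)² = 1 - 4X`, and `B` satisfies `(1 - 4X) B' = 2B`. Together these make the derivative of
`B (1 - 2XC)` vanish, so `B (1 - 2XC) = 1`. Comparing coefficients of `X^(m+1)` in `B = 1 + 2XCB`
gives `2 ∑ₖ catalan k * centralBinom (m - k) = centralBinom (m + 1) = 2 * choose (2m + 1) m`; the
summands of the theorem are these products written with factorials.
-/

open Nat Finset

namespace PowerSeries

variable (R : Type*) [CommRing R]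

noncomputable def centralBinomSeries : R⟦X⟧ := mk fun n => (centralBinom n : R)

variable {R}

@[simp]
lemma coeff_centralBinomSeries (n : ℕ) : coeff n (centralBinomSeries R) = centralBinom n :=
  coeff_mk _ _

lemma one_sub_four_mul_X_mul_derivative_centralBinomSeries :
    (1 - 4 * X) * d⁄dX R (centralBinomSeries R) = 2 * centralBinomSeries R := by
  ext n
  rw [← map_ofNat C 4, ← map_ofNat C 2]
  simp only [sub_mul, one_mul, mul_assoc, map_sub, coeff_C_mul, coeff_derivative,
    coeff_centralBinomSeries]
  rcases n with _ | n
  · simp [centralBinom]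
  · have h := congrArg (Nat.cast (R := R)) (succ_mul_centralBinom_succ (n + 1))
    push_cast at h
    rw [coeff_succ_X_mul, coeff_derivative, coeff_centralBinomSeries]
    push_cast
    linear_combination h

lemma one_sub_two_mul_X_mul_catalanSeries_sq :
    (1 - 2 * X * map (Nat.castRingHom R) catalanSeries) ^ 2 = 1 - 4 * X := by
  have h := congrArg (map (Nat.castRingHom R)) catalanSeries_sq_mul_X_add_one
  simp only [map_add, map_mul, map_pow, map_X, map_one] at h
  linear_combination (4 * X) * h

lemma centralBinomSeries_mul_one_sub_two_mul_X_mul_catalanSeries [IsDomain R] [CharZero R] :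
    centralBinomSeries R * (1 - 2 * X * map (Nat.castRingHom R) catalanSeries) = 1 := by
  set B := centralBinomSeries R
  set Y := 1 - 2 * X * map (Nat.castRingHom R) catalanSeries
  have hY₀ : constantCoeff Y = 1 := by simp [Y]
  have hB₀ : constantCoeff B = 1 := by
    simp [B, ← coeff_zero_eq_constantCoeff_apply, centralBinom]
  have hY : Y ^ 2 = 1 - 4 * X := one_sub_two_mul_X_mul_catalanSeries_sq
  clear_value Y
  have hYY' : 2 * Y * d⁄dX R Y = -4 := by
    have h := congrArg (d⁄dX R) hY
    have h4 : d⁄dX R (4 : R⟦X⟧) = 0 := by exact_mod_cast (d⁄dX R).map_natCast 4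
    rw [derivative_pow, map_sub, Derivation.map_one_eq_zero, Derivation.leibniz, h4,
      derivative_X] at h
    simp only [smul_eq_mul, Nat.cast_ofNat] at h
    linear_combination h
  have h2Y : 2 * Y ≠ 0 := fun h => by
    simpa [hY₀, ← map_ofNat C 2] using congrArg constantCoeff h
  have hBY' : d⁄dX R (B * Y) = 0 := by
    refine (_root_.mul_eq_zero.mp ?_).resolve_left h2Y
    rw [Derivation.leibniz, smul_eq_mul, smul_eq_mul]
    linear_combination B * hYY' + 2 * d⁄dX R B * hY +
      2 * one_sub_four_mul_X_mul_derivative_centralBinomSeries (R := R)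
  refine derivative.ext (by simpa using hBY') ?_
  simp [hY₀, hB₀]

end PowerSeries

open PowerSeries in
theorem Nat.two_mul_sum_catalan_mul_centralBinom (n : ℕ) :
    2 * ∑ k ∈ range (n + 1), catalan k * centralBinom (n - k) = centralBinom (n + 1) := by
  have h : centralBinomSeries ℚ =
      1 + C 2 * (X * (map (Nat.castRingHom ℚ) catalanSeries * centralBinomSeries ℚ)) := by
    rw [map_ofNat C 2]
    linear_combination centralBinomSeries_mul_one_sub_two_mul_X_mul_catalanSeries (R := ℚ)
  have h := congrArg (coeff (n + 1)) h
  rw [map_add, coeff_one, if_neg n.succ_ne_zero, coeff_C_mul, coeff_succ_X_mul, coeff_mul,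
    Nat.sum_antidiagonal_eq_sum_range_succ (fun i j => coeff i _ * coeff j _)] at h
  simp only [coeff_centralBinomSeries, coeff_map, catalanSeries_coeff, zero_add,
    Nat.succ_eq_add_one, Nat.coe_castRingHom] at h
  exact_mod_cast h.symm

theorem Nat.centralBinom_succ_eq_two_mul_choose (n : ℕ) :
    centralBinom (n + 1) = 2 * (2 * n + 1).choose n := by
  rw [centralBinom, show 2 * (n + 1) = 2 * n + 1 + 1 by ring, choose_succ_succ,
    choose_symm_half]
  ring

theorem Nat.sum_catalan_mul_centralBinom (n : ℕ) :
    ∑ k ∈ range (n + 1), catalan k * centralBinom (n - k) = (2 * n + 1).choose n := by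
  have h := two_mul_sum_catalan_mul_centralBinom n
  rw [centralBinom_succ_eq_two_mul_choose] at h
  omega

theorem Nat.cast_centralBinom_eq_factorial_div {K : Type*} [Field K] [CharZero K] (n : ℕ) :
    (centralBinom n : K) = (2 * n)! / (n ! * n !) := by
  rw [centralBinom_eq_two_mul_choose, cast_choose K (by omega), show 2 * n - n = n by omega]

theorem Nat.cast_catalan_eq_factorial_div {K : Type*} [Field K] [CharZero K] (n : ℕ) :
    (catalan n : K) = (2 * n)! / (n ! * (n + 1)!) := by
  have h := cast_centralBinom_eq_factorial_div (K := K) n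
  rw [← succ_mul_catalan_eq_centralBinom] at h
  rw [factorial_succ]
  push_cast at h ⊢
  field_simp at h ⊢
  linear_combination h

theorem stmt_3 (m : ℕ) :
    (∑ k ∈ Finset.range (m + 1),
      (((2 * k)! : ℚ) / (k ! * (k + 1)!)) *
      (((2 * m - 2 * k)! : ℚ) / ((m - k)! * (m - k)!)))
      = ((2 * m + 1).choose m : ℚ) := by
  rw [← Nat.sum_catalan_mul_centralBinom]
  push_cast
  refine sum_congr rfl fun k _ => ?_
  rw [Nat.cast_catalan_eq_factorial_div, Nat.cast_centralBinom_eq_factorial_div, Nat.mul_sub]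
end

section
/- For every natural number m, the sum over j from 0 to m of binom(2j, j) * binom(2m-2j, m-j) equals 4^m. -/
open Nat Finset Polynomial

lemma rchoose_succ (r : ℚ) (j : ℕ) :
    Ring.choose r (j + 1) = Ring.choose r j * (r - j) / (j + 1) := by
  have h1 := Ring.descPochhammer_eq_factorial_smul_choose r (j + 1)
  have h2 := Ring.descPochhammer_eq_factorial_smul_choose r j
  rw [descPochhammer_succ_right, smeval_mul, smeval_sub, smeval_X, smeval_natCast, h2] at h1
  have hj : (j.factorial : ℚ) ≠ 0 := by positivity
  have hj1 : ((j : ℚ) + 1) ≠ 0 := by positivity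
  rw [eq_div_iff hj1]
  refine mul_left_cancel₀ hj ?_
  rw [Nat.factorial_succ] at h1
  simp only [pow_one, pow_zero, mul_one, nsmul_eq_mul] at h1
  push_cast at h1
  linear_combination -h1

lemma rchoose_half (j : ℕ) :
    Ring.choose (-(1/2) : ℚ) j = (-(1/4))^j * ((2*j).choose j) := by
  induction j with
  | zero => simp [Ring.choose_zero_right]
  | succ j ih =>
    have hrec : (j+1) * ((2*(j+1)).choose (j+1)) = 2*(2*j+1)*((2*j).choose j) := by
      simpa [Nat.centralBinom] using Nat.succ_mul_centralBinom_succ j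
    have hrecQ : ((j:ℚ)+1) * ((2*(j+1)).choose (j+1) : ℚ)
        = 2*(2*(j:ℚ)+1) * ((2*j).choose j : ℚ) := by exact_mod_cast hrec
    have hj1 : ((j : ℚ) + 1) ≠ 0 := by positivity
    rw [rchoose_succ, ih, div_eq_iff hj1]
    linear_combination ((1/4:ℚ) * (-(1/4:ℚ))^j) * hrecQ

lemma rchoose_negone (m : ℕ) : Ring.choose (-1 : ℚ) m = (-1)^m := by
  induction m with
  | zero => simp [Ring.choose_zero_right]
  | succ m ih =>
    have hj1 : ((m : ℚ) + 1) ≠ 0 := by positivity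
    rw [rchoose_succ, ih]
    field_simp
    ring

theorem stmt_4 (m : ℕ) :
    (∑ j ∈ Finset.range (m + 1), (2 * j).choose j * (2 * m - 2 * j).choose (m - j))
      = 4 ^ m := by
  have hcomm : Commute (-(1/2) : ℚ) (-(1/2) : ℚ) := mul_comm _ _
  have hv := Ring.add_choose_eq (R := ℚ) (r := -(1/2)) (s := -(1/2)) m hcomm
  have hls : (-(1/2) : ℚ) + (-(1/2)) = -1 := by norm_num
  rw [hls, rchoose_negone, Finset.Nat.sum_antidiagonal_eq_sum_range_succ_mk] at hv
  have hsum : ∑ k ∈ Finset.range (m+1),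
      Ring.choose (-(1/2) : ℚ) k * Ring.choose (-(1/2) : ℚ) (m - k)
      = (-(1/4 : ℚ))^m * ∑ k ∈ Finset.range (m+1),
          (((2*k).choose k : ℚ) * ((2*m - 2*k).choose (m-k) : ℚ)) := by
    rw [Finset.mul_sum]
    refine Finset.sum_congr rfl (fun k hk => ?_)
    have hkm : k ≤ m := Nat.lt_succ_iff.mp (Finset.mem_range.mp hk)
    have h2 : 2 * (m - k) = 2*m - 2*k := by omega
    have hp : (-(1/4):ℚ)^k * (-(1/4):ℚ)^(m-k) = (-(1/4):ℚ)^m := by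
      rw [← pow_add, Nat.add_sub_cancel' hkm]
    rw [rchoose_half, rchoose_half, h2]
    linear_combination (((2*k).choose k : ℚ) * ((2*m - 2*k).choose (m-k) : ℚ)) * hp
  rw [hsum] at hv
  have h4 : ((∑ j ∈ Finset.range (m + 1),
      (2 * j).choose j * (2 * m - 2 * j).choose (m - j) : ℕ) : ℚ) = 4 ^ m := by
    push_cast
    have hne : (-(1/4 : ℚ))^m ≠ 0 := by
      apply pow_ne_zero; norm_num
    have h4m : ((-1 : ℚ))^m = (-(1/4 : ℚ))^m * 4^m := by
      rw [← mul_pow]; norm_num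
    rw [h4m] at hv
    exact mul_left_cancel₀ hne hv.symm
  exact_mod_cast h4
end

section
/- Define s(m) = sum over k from 0 to m of ((2k)!/(k!*(k+1)!)) * ((2m-2k)!/((m-k)!*(m-k)!)). Then for every natural number m, (m+2) * s(m+1) = 2*(2m+3) * s(m). -/
open Nat Finset

noncomputable def Cc (k : ℕ) : ℚ := ((2 * k)! : ℚ) / (k ! * (k + 1)!)
noncomputable def Bb (j : ℕ) : ℚ := ((2 * j)! : ℚ) / (j ! * j !)

lemma Bb_zero : Bb 0 = 1 := by simp [Bb]

lemma Bb_succ (j : ℕ) : Bb (j + 1) = (2*j+2)*(2*j+1)/((j+1)*(j+1)) * Bb j := by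
  have h : 2 * (j + 1) = (2 * j + 1) + 1 := by ring
  have hf : ((j:ℚ)+1) ≠ 0 := by positivity
  have hj : ((j ! : ℚ)) ≠ 0 := by exact_mod_cast (Nat.factorial_ne_zero j)
  simp only [Bb, h, Nat.factorial_succ]
  push_cast
  field_simp
  ring

lemma Cc_succ (k : ℕ) : Cc (k + 1) = (2*k+2)*(2*k+1)/((k+2)*(k+1)) * Cc k := by
  have h : 2 * (k + 1) = (2 * k + 1) + 1 := by ring
  have hk : ((k ! : ℚ)) ≠ 0 := by exact_mod_cast (Nat.factorial_ne_zero k)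
  have hk1 : (((k+1) ! : ℚ)) ≠ 0 := by exact_mod_cast (Nat.factorial_ne_zero (k+1))
  have h1 : ((k:ℚ)+1) ≠ 0 := by positivity
  have h2 : ((k:ℚ)+2) ≠ 0 := by positivity
  simp only [Cc, h, Nat.factorial_succ]
  push_cast
  field_simp
  ring

theorem stmt_5 (s : ℕ → ℚ)
    (hs : ∀ m, s m = ∑ k ∈ Finset.range (m + 1),
      (((2 * k)! : ℚ) / (k ! * (k + 1)!)) *
      (((2 * m - 2 * k)! : ℚ) / ((m - k)! * (m - k)!))) :
    ∀ m : ℕ, (m + 2 : ℚ) * s (m + 1) = 2 * (2 * m + 3) * s m := by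
  intro m
  have hterm : ∀ n : ℕ, s n = ∑ k ∈ Finset.range (n + 1), Cc k * Bb (n - k) := by
    intro n
    rw [hs n]
    refine Finset.sum_congr rfl fun k hk => ?_
    simp only [Finset.mem_range] at hk
    have h2 : 2 * n - 2 * k = 2 * (n - k) := by omega
    simp [Cc, Bb, h2]
  set g : ℕ → ℚ := fun k =>
    if k ≤ m then 2*k*(k+1)*(2*((m-k:ℕ):ℚ)+1)/(((m:ℚ)+1)*(((m-k:ℕ):ℚ)+1)) * Cc k * Bb (m-k)
    else ((m:ℚ)+2) * Cc (m+1) with hg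
  have key : ∀ k ∈ Finset.range (m+1),
      ((m:ℚ)+2) * (Cc k * Bb (m+1-k)) - 2*(2*(m:ℚ)+3) * (Cc k * Bb (m-k))
        = g k - g (k+1) := by
    intro k hk
    simp only [Finset.mem_range] at hk
    rcases Nat.lt_or_ge k m with hkm | hkm
    · -- k < m
      obtain ⟨j, rfl⟩ : ∃ j, m = k + j + 1 := ⟨m - k - 1, by omega⟩
      have e1 : k + j + 1 + 1 - k = j + 2 := by omega
      have e2 : k + j + 1 - k = j + 1 := by omega
      have e3 : k + j + 1 - (k + 1) = j := by omega
      have hk1 : k ≤ k + j + 1 := by omega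
      have hk2 : k + 1 ≤ k + j + 1 := by omega
      simp only [hg, e1, e2, e3, if_pos hk1, if_pos hk2]
      rw [show j + 2 = (j+1) + 1 from rfl, Bb_succ (j+1), Bb_succ j, Cc_succ k]
      have hj1 : ((j:ℚ)+1) ≠ 0 := by positivity
      have hj2 : ((j:ℚ)+2) ≠ 0 := by positivity
      have hkq1 : ((k:ℚ)+1) ≠ 0 := by positivity
      have hkq2 : ((k:ℚ)+2) ≠ 0 := by positivity
      have hm1 : ((k:ℚ)+(j:ℚ)+1+1) ≠ 0 := by positivity
      push_cast
      field_simp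
      ring
    · -- k = m
      have hkm' : k = m := by omega
      subst hkm'
      have e1 : k + 1 - k = 1 := by omega
      have e2 : k - k = 0 := by omega
      have hnot : ¬ (k + 1 ≤ k) := by omega
      simp only [hg, e1, e2, if_pos (le_refl k), if_neg hnot]
      rw [Cc_succ k, show (1:ℕ) = 0 + 1 from rfl, Bb_succ 0, Bb_zero]
      have hkq1 : ((k:ℚ)+1) ≠ 0 := by positivity
      have hkq2 : ((k:ℚ)+2) ≠ 0 := by positivity
      push_cast
      field_simp
      ring
  have hsum : ∑ k ∈ Finset.range (m+1),
      (((m:ℚ)+2) * (Cc k * Bb (m+1-k)) - 2*(2*(m:ℚ)+3) * (Cc k * Bb (m-k)))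
      = g 0 - g (m+1) := by
    rw [Finset.sum_congr rfl key]
    exact Finset.sum_range_sub' g (m+1)
  have hg0 : g 0 = 0 := by simp [hg]
  have hgm : g (m+1) = ((m:ℚ)+2) * Cc (m+1) := by
    simp [hg]
  rw [hterm (m+1), hterm m]
  rw [Finset.sum_range_succ]
  have hlast : (m + 1) - (m + 1) = 0 := by omega
  rw [hlast, Bb_zero]
  rw [Finset.sum_sub_distrib, ← Finset.mul_sum, ← Finset.mul_sum] at hsum
  rw [hg0, hgm] at hsum
  linarith [hsum]
end

section
/- For every natural number m ≥ 1, (2m)!!/(2m+1)!! satisfies the bounds √π/(2√(m+1)) < (2m)!!/(2m+1)!! < √π/(2√m). -/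
/-!
Write `W m` for the partial Wallis product `∏_{i<m} (2i+2)²/((2i+1)(2i+3))`, which equals
`(2m+1) · ((2m)‼/(2m+1)‼)²`. Comparing `∫₀^π sin^n` for consecutive `n` gives the classical bounds
`(2m+1)/(2m+2) · π/2 ≤ W m ≤ π/2`; solving for the ratio gives both inequalities. The upper one is
strict because `2m < 2m+1`, the lower one because equality would make `π` rational.
-/

open Nat Real

noncomputable def wallisRatio (m : ℕ) : ℝ := ((2 * m)‼ : ℝ) / ((2 * m + 1)‼)

lemma wallisRatio_pos (m : ℕ) : 0 < wallisRatio m := by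
  unfold wallisRatio
  have := doubleFactorial_pos (2 * m)
  have := doubleFactorial_pos (2 * m + 1)
  positivity

lemma Real.Wallis.W_eq_mul_wallisRatio_sq (m : ℕ) :
    Wallis.W m = (2 * m + 1) * wallisRatio m ^ 2 := by
  induction m with
  | zero => simp [Wallis.W, wallisRatio]
  | succ m ih =>
    have hodd : (2 * m + 1 : ℝ) ≠ 0 := by positivity
    have heven : (((2 * m)‼ : ℕ) : ℝ) ≠ 0 := by exact_mod_cast (doubleFactorial_pos _).ne'
    have hodd' : (((2 * m + 1)‼ : ℕ) : ℝ) ≠ 0 := by exact_mod_cast (doubleFactorial_pos _).ne'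
    rw [Wallis.W_succ, ih, wallisRatio, wallisRatio, show 2 * (m + 1) = 2 * m + 2 by ring,
      doubleFactorial_add_two, show 2 * m + 2 + 1 = 2 * m + 1 + 2 by ring, doubleFactorial_add_two]
    push_cast
    field_simp
    ring

lemma sq_wallisRatio_le (m : ℕ) : wallisRatio m ^ 2 ≤ π / (2 * (2 * m + 1)) := by
  rw [le_div_iff₀ (by positivity)]
  linarith [Wallis.W_le m, Wallis.W_eq_mul_wallisRatio_sq m]

lemma pi_div_le_sq_wallisRatio (m : ℕ) : π / (4 * (m + 1)) ≤ wallisRatio m ^ 2 := by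
  have h := Wallis.le_W m
  rw [Wallis.W_eq_mul_wallisRatio_sq, div_mul_eq_mul_div, div_le_iff₀ (by positivity)] at h
  rw [div_le_iff₀ (by positivity)]
  nlinarith

lemma pi_div_lt_sq_wallisRatio (m : ℕ) : π / (4 * (m + 1)) < wallisRatio m ^ 2 := by
  refine (pi_div_le_sq_wallisRatio m).lt_of_ne fun h => ?_
  refine irrational_pi.ne_rat (4 * (m + 1) * ((2 * m)‼ / (2 * m + 1)‼ : ℚ) ^ 2) ?_
  have hπ : π = 4 * (m + 1) * wallisRatio m ^ 2 := by
    rw [← h]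
    field_simp
  rw [hπ, wallisRatio]
  push_cast
  ring

lemma sq_wallisRatio_lt {m : ℕ} (hm : 0 < m) : wallisRatio m ^ 2 < π / (4 * m) := by
  refine (sq_wallisRatio_le m).trans_lt (div_lt_div_of_pos_left pi_pos ?_ ?_)
  · exact_mod_cast Nat.mul_pos (by norm_num) hm
  · linarith

lemma sqrt_div_two_mul_sqrt {a : ℝ} (ha : 0 ≤ a) (x : ℝ) : √a / (2 * √x) = √(a / (4 * x)) := by
  rw [sqrt_div ha, sqrt_mul (by norm_num : (0 : ℝ) ≤ 4),
    show (4 : ℝ) = 2 ^ 2 by norm_num, sqrt_sq two_pos.le]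

theorem stmt_11 (m : ℕ) (hm : 1 ≤ m) :
    Real.sqrt Real.pi / (2 * Real.sqrt (m + 1)) < ((2 * m)‼ : ℝ) / ((2 * m + 1)‼) ∧
    ((2 * m)‼ : ℝ) / ((2 * m + 1)‼) < Real.sqrt Real.pi / (2 * Real.sqrt m) := by
  rw [sqrt_div_two_mul_sqrt pi_pos.le, sqrt_div_two_mul_sqrt pi_pos.le, ← wallisRatio]
  constructor
  · rw [sqrt_lt' (wallisRatio_pos m)]
    exact pi_div_lt_sq_wallisRatio m
  · rw [lt_sqrt (wallisRatio_pos m).le]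
    exact sq_wallisRatio_lt hm
end
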